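/- The topological group Homeo₊(S¹) of orientation-preserving homeomorphisms of the circle with the uniform convergence topology is Roelcke precompact. -/

import Mathlib

open Pointwise

variable {X : Type*} [TopologicalSpace X]

instance homeoGroup : Group (X ≃ₜ X) where
  mul f g := g.trans f
  one := Homeomorph.refl X
  inv := Homeomorph.symm
  mul_assoc _ _ _ := Homeomorph.ext fun _ => rfl
  one_mul _ := Homeomorph.ext fun _ => rfl
  mul_one _ := Homeomorph.ext fun _ => rfl
  inv_mul_cancel f := Homeomorph.ext fun x => f.symm_apply_apply x

/-- The topology of uniform convergence (= compact-open topology) on the homeomorphism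
group, induced from `C(X, X) × C(X, X)` via `f ↦ (f, f⁻¹)`. -/
instance homeoTop : TopologicalSpace (X ≃ₜ X) :=
  TopologicalSpace.induced
    (fun f => ((⟨f, f.continuous_toFun⟩ : C(X, X)), (⟨f.symm, f.symm.continuous_toFun⟩ : C(X, X))))
    inferInstance

/-- The circle `ℝ/ℤ`. -/
abbrev Circle1 : Type := AddCircle (1 : ℝ)

/-- A homeomorphism of the circle is orientation preserving if it lifts to a strictly
monotone map of the reals. -/
def OrientationPreserving (f : Circle1 ≃ₜ Circle1) : Prop :=
  ∃ F : ℝ → ℝ, StrictMono F ∧ ∀ x : ℝ, f ((x : ℝ) : Circle1) = ((F x : ℝ) : Circle1)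


open Set Function

instance fact_zero_lt_one_real : Fact ((0:ℝ) < 1) := ⟨one_pos⟩

instance : Fintype Ordering :=
  ⟨{Ordering.lt, Ordering.eq, Ordering.gt}, fun x => by cases x <;> simp⟩

namespace RoelckeAux
noncomputable section
attribute [local instance] Classical.propDecidable


lemma coe_eq_coe_iff {x y : ℝ} :
    ((x:ℝ) : Circle1) = ((y:ℝ) : Circle1) ↔ ∃ k : ℤ, x - y = k := by
  rw [QuotientAddGroup.eq_iff_sub_mem]
  constructor
  · rintro ⟨k, hk⟩
    exact ⟨k, by simpa using hk.symm⟩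
  · rintro ⟨k, hk⟩
    exact ⟨k, by simpa using hk.symm⟩

lemma coe_add_int (x : ℝ) (k : ℤ) : ((x + k : ℝ) : Circle1) = ((x:ℝ) : Circle1) :=
  coe_eq_coe_iff.mpr ⟨k, by ring⟩

lemma coe_sub_int (x : ℝ) (k : ℤ) : ((x - k : ℝ) : Circle1) = ((x:ℝ) : Circle1) :=
  coe_eq_coe_iff.mpr ⟨-k, by push_cast; ring⟩

lemma coe_add_one (x : ℝ) : ((x + 1 : ℝ) : Circle1) = ((x:ℝ) : Circle1) := by
  simpa using coe_add_int x 1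

lemma coe_fract (x : ℝ) : ((Int.fract x : ℝ) : Circle1) = ((x:ℝ) : Circle1) := by
  rw [Int.fract]
  exact coe_sub_int x ⌊x⌋

/-- representative in [0,1) -/
noncomputable def rep (z : Circle1) : ℝ := ((AddCircle.equivIco 1 0 z : Ico (0:ℝ) (0+1)) : ℝ)

lemma rep_mem (z : Circle1) : rep z ∈ Ico (0:ℝ) 1 := by
  have := (AddCircle.equivIco 1 0 z).2
  simpa [rep] using this

lemma coe_rep (z : Circle1) : ((rep z : ℝ) : Circle1) = z :=
  (AddCircle.equivIco (1:ℝ) 0).symm_apply_apply z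

lemma rep_coe {x : ℝ} (hx : x ∈ Ico (0:ℝ) 1) : rep ((x : ℝ) : Circle1) = x := by
  obtain ⟨k, hk⟩ := coe_eq_coe_iff.mp (coe_rep ((x:ℝ) : Circle1))
  have h1 := rep_mem ((x:ℝ) : Circle1)
  have : k = 0 := by
    have h2 : (k:ℝ) = rep ((x:ℝ):Circle1) - x := by linarith
    have : -1 < (k:ℝ) ∧ (k:ℝ) < 1 := by
      constructor <;> rw [h2] <;>
        [nlinarith [h1.1, h1.2, hx.1, hx.2]; nlinarith [h1.1, h1.2, hx.1, hx.2]]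
    exact_mod_cast by
      have h3 : (-1:ℝ) < k := this.1
      have h4 : (k:ℝ) < 1 := this.2
      have : -1 < k ∧ k < 1 := ⟨by exact_mod_cast h3, by exact_mod_cast h4⟩
      omega
  have hk0 : (k:ℝ) = 0 := by exact_mod_cast this
  linarith [hk, hk0]

lemma coe_eq_coe {x y : ℝ} (hx : x ∈ Ico (0:ℝ) 1) (hy : y ∈ Ico (0:ℝ) 1) :
    ((x:ℝ) : Circle1) = ((y:ℝ) : Circle1) ↔ x = y := by
  constructor
  · intro h
    have := rep_coe hx
    rw [h, rep_coe hy] at this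
    exact this.symm
  · rintro rfl; rfl

lemma dist_coe_le (x y : ℝ) : dist ((x:ℝ) : Circle1) ((y:ℝ) : Circle1) ≤ |x - y| := by
  have h1 : dist ((x:ℝ) : Circle1) ((y:ℝ) : Circle1) = ‖((x:ℝ) : Circle1) - ((y:ℝ):Circle1)‖ :=
    dist_eq_norm _ _
  have h2 : ((x:ℝ) : Circle1) - ((y:ℝ):Circle1) = ((x - y : ℝ) : Circle1) := by
    rfl
  rw [h1, h2]
  have := QuotientAddGroup.norm_mk_le_norm (S := AddSubgroup.zmultiples (1:ℝ)) (m := x - y)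
  simpa [Real.norm_eq_abs] using this




/-- A continuous strictly monotone map of ℝ, identity outside `(a,b) ⊆ [0,1]`, sending `p ↦ q`. -/
lemma exists_gadget {a b p q : ℝ} (h0a : 0 ≤ a) (hap : a < p) (hpb : p < b) (hb1 : b ≤ 1)
    (haq : a < q) (hqb : q < b) :
    ∃ B : ℝ → ℝ, Continuous B ∧ StrictMono B ∧ B p = q ∧
      (∀ x, x ≤ a → B x = x) ∧ (∀ x, b ≤ x → B x = x) := by
  have hpa : (0:ℝ) < p - a := by linarith
  have hbp : (0:ℝ) < b - p := by linarith
  set s₂ : ℝ := (q - a) / (p - a) with hs₂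
  set s₃ : ℝ := (b - q) / (b - p) with hs₃
  have key₂ : q - a = (p - a) * s₂ := by rw [hs₂]; field_simp
  have key₃ : b - q = (b - p) * s₃ := by rw [hs₃]; field_simp
  have hs₂pos : 0 < s₂ := div_pos (by linarith) hpa
  have hs₃pos : 0 < s₃ := div_pos (by linarith) hbp
  rcases le_total p q with hpq | hqp
  · -- q ≥ p : slopes s₂ ≥ 1, s₃ ≤ 1
    have hs₂1 : 1 ≤ s₂ := (le_div_iff₀ hpa).mpr (by linarith)
    have hs₃1 : s₃ ≤ 1 := (div_le_one hbp).mpr (by linarith)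
    refine ⟨fun x => min (max x (q + (x - p) * s₂)) (max x (q + (x - p) * s₃)),
      by fun_prop, ?_, ?_, ?_, ?_⟩
    · intro x y hxy
      exact min_lt_min (max_lt_max hxy (by nlinarith)) (max_lt_max hxy (by nlinarith))
    · show min (max p (q + (p - p) * s₂)) (max p (q + (p - p) * s₃)) = q
      rw [show q + (p - p) * s₂ = q by ring, show q + (p - p) * s₃ = q by ring,
        max_eq_right hpq, min_self]
    · intro x hx
      show min (max x (q + (x - p) * s₂)) (max x (q + (x - p) * s₃)) = x
      have h2 : q + (x - p) * s₂ ≤ x := by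
        nlinarith [mul_nonneg (sub_nonneg.mpr hx) (sub_nonneg.mpr hs₂1)]
      have h3 : x ≤ q + (x - p) * s₃ := by
        nlinarith [mul_nonneg (sub_nonneg.mpr (le_trans hx (by linarith : a ≤ b)))
          (sub_nonneg.mpr hs₃1)]
      rw [max_eq_left h2, max_eq_right h3]
      exact min_eq_left h3
    · intro x hx
      show min (max x (q + (x - p) * s₂)) (max x (q + (x - p) * s₃)) = x
      have h2 : x ≤ q + (x - p) * s₂ := by
        nlinarith [mul_nonneg (sub_nonneg.mpr (le_trans (by linarith : a ≤ b) hx))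
          (sub_nonneg.mpr hs₂1)]
      have h3 : q + (x - p) * s₃ ≤ x := by
        nlinarith [mul_nonneg (sub_nonneg.mpr hx) (sub_nonneg.mpr hs₃1)]
      rw [max_eq_right h2, max_eq_left h3]
      exact min_eq_right h2
  · -- q ≤ p
    have hs₂1 : s₂ ≤ 1 := (div_le_one hpa).mpr (by linarith)
    have hs₃1 : 1 ≤ s₃ := (le_div_iff₀ hbp).mpr (by linarith)
    refine ⟨fun x => max (min x (q + (x - p) * s₂)) (min x (q + (x - p) * s₃)),
      by fun_prop, ?_, ?_, ?_, ?_⟩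
    · intro x y hxy
      exact max_lt_max (min_lt_min hxy (by nlinarith)) (min_lt_min hxy (by nlinarith))
    · show max (min p (q + (p - p) * s₂)) (min p (q + (p - p) * s₃)) = q
      rw [show q + (p - p) * s₂ = q by ring, show q + (p - p) * s₃ = q by ring,
        min_eq_right hqp, max_self]
    · intro x hx
      show max (min x (q + (x - p) * s₂)) (min x (q + (x - p) * s₃)) = x
      have h2 : x ≤ q + (x - p) * s₂ := by
        nlinarith [mul_nonneg (sub_nonneg.mpr hx) (sub_nonneg.mpr hs₂1)]
      have h3 : q + (x - p) * s₃ ≤ x := by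
        nlinarith [mul_nonneg (sub_nonneg.mpr (le_trans hx (by linarith : a ≤ b)))
          (sub_nonneg.mpr hs₃1)]
      rw [min_eq_left h2, min_eq_right h3]
      exact max_eq_left h3
    · intro x hx
      show max (min x (q + (x - p) * s₂)) (min x (q + (x - p) * s₃)) = x
      have h2 : q + (x - p) * s₂ ≤ x := by
        nlinarith [mul_nonneg (sub_nonneg.mpr (le_trans (by linarith : a ≤ b) hx))
          (sub_nonneg.mpr hs₂1)]
      have h3 : x ≤ q + (x - p) * s₃ := by
        nlinarith [mul_nonneg (sub_nonneg.mpr hx) (sub_nonneg.mpr hs₃1)]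
      rw [min_eq_right h2, min_eq_left h3]
      exact max_eq_right h2


lemma per_add_int {W : ℝ → ℝ} (hper : ∀ x, W (x + 1) = W x + 1) (x : ℝ) (k : ℤ) :
    W (x + k) = W x + k := by
  induction k using Int.induction_on with
  | zero => simp
  | succ m ih =>
      have h1 : (x + (m + 1 : ℤ) : ℝ) = (x + m) + 1 := by push_cast; ring
      rw [h1, hper]
      push_cast at ih ⊢
      linarith
  | pred m ih =>
      have h1 : (x + (-m : ℤ) : ℝ) = (x + (-m - 1 : ℤ)) + 1 := by push_cast; ring
      rw [h1, hper] at ih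
      push_cast at ih ⊢
      linarith

lemma per_fract {W : ℝ → ℝ} (hper : ∀ x, W (x + 1) = W x + 1) (x : ℝ) :
    W x = W (Int.fract x) + ⌊x⌋ := by
  have h := per_add_int hper (Int.fract x) ⌊x⌋
  rw [show Int.fract x + (⌊x⌋ : ℝ) = x by rw [Int.fract]; ring] at h
  exact h

/-- Periodized gadget. -/
lemma exists_periodic_gadget {a b p q : ℝ} (h0a : 0 ≤ a) (hap : a < p) (hpb : p < b)
    (hb1 : b ≤ 1) (haq : a < q) (hqb : q < b) :
    ∃ L : ℝ → ℝ, Continuous L ∧ StrictMono L ∧ (∀ x, L (x + 1) = L x + 1) ∧ L p = q ∧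
      (∀ x, 0 ≤ x → x ≤ 1 → x ∉ Ioo a b → L x = x) ∧ (∀ k : ℤ, L (k:ℝ) = k) := by
  obtain ⟨B, hBc, hBm, hBp, hBlow, hBhigh⟩ := exists_gadget h0a hap hpb hb1 haq hqb
  have hB0 : B 0 = 0 := hBlow 0 h0a
  have hB1 : B 1 = 1 := hBhigh 1 hb1
  have hψ01 : (fun x => B x - x) 0 = (fun x => B x - x) (0 + 1) := by simp [hB0, hB1]
  have hψc : Continuous (fun x => B x - x) := by fun_prop
  have hΨc : Continuous (AddCircle.liftIco 1 0 (fun x => B x - x)) :=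
    AddCircle.liftIco_continuous hψ01 hψc.continuousOn
  set L : ℝ → ℝ := fun x => x + AddCircle.liftIco 1 0 (fun x => B x - x) ((x : ℝ) : Circle1)
    with hL
  have hLc : Continuous L := by
    apply Continuous.add continuous_id
    exact hΨc.comp continuous_quotient_mk'
  have hLIco : ∀ x, x ∈ Ico (0:ℝ) 1 → L x = B x := by
    intro x hx
    have h1 : AddCircle.liftIco 1 0 (fun x => B x - x) ((x:ℝ):Circle1) = B x - x :=
      AddCircle.liftIco_coe_apply (by simpa using hx)
    simp only [hL, h1]; ring
  have hLper : ∀ x, L (x + 1) = L x + 1 := by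
    intro x
    simp only [hL, coe_add_one]
    ring
  have hLfract : ∀ x, L x = B (Int.fract x) + ⌊x⌋ := by
    intro x
    rw [per_fract hLper x, hLIco _ ⟨Int.fract_nonneg x, Int.fract_lt_one x⟩]
  have hBrange : ∀ x, 0 ≤ x → x < 1 → 0 ≤ B x ∧ B x < 1 := by
    intro x hx0 hx1
    constructor
    · rw [← hB0]; exact hBm.le_iff_le.mpr hx0
    · rw [← hB1]; exact hBm hx1
  refine ⟨L, hLc, ?_, hLper, ?_, ?_, ?_⟩
  · intro x y hxy
    rw [hLfract x, hLfract y]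
    have hx' := hBrange _ (Int.fract_nonneg x) (Int.fract_lt_one x)
    have hy' := hBrange _ (Int.fract_nonneg y) (Int.fract_lt_one y)
    rcases lt_or_ge ⌊x⌋ ⌊y⌋ with h | h
    · have h2 : (⌊x⌋:ℝ) + 1 ≤ (⌊y⌋:ℝ) := by exact_mod_cast Int.add_one_le_iff.mpr h
      linarith [hx'.2, hy'.1]
    · have hfe : ⌊x⌋ = ⌊y⌋ := le_antisymm (Int.floor_mono hxy.le) h
      have hfr : Int.fract x < Int.fract y := by
        simp only [Int.fract, hfe]
        linarith
      have := hBm hfr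
      rw [hfe]
      linarith
  · have hp01 : p ∈ Ico (0:ℝ) 1 := ⟨by linarith, by linarith⟩
    rw [hLIco _ hp01, hBp]
  · intro x hx0 hx1 hxab
    rcases lt_or_eq_of_le hx1 with h1 | h1
    · rw [hLIco _ ⟨hx0, h1⟩]
      rcases le_or_gt x a with h | h
      · exact hBlow x h
      · rcases le_or_gt b x with h' | h'
        · exact hBhigh x h'
        · exact absurd ⟨h, h'⟩ hxab
    · subst h1
      rw [hLfract 1]
      norm_num [hB0]
  · intro k
    rw [hLfract]
    simp [Int.fract_intCast, hB0]

section Base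
-- general-base representative
noncomputable def repb (a : ℝ) (z : Circle1) : ℝ :=
  ((AddCircle.equivIco 1 a z : Ico a (a+1)) : ℝ)


lemma repb_mem (a : ℝ) (z : Circle1) : repb a z ∈ Ico a (a+1) :=
  (AddCircle.equivIco 1 a z).2

lemma coe_repb (a : ℝ) (z : Circle1) : ((repb a z : ℝ) : Circle1) = z :=
  (AddCircle.equivIco (1:ℝ) a).symm_apply_apply z

lemma repb_coe {a x : ℝ} (hx : x ∈ Ico a (a+1)) : repb a ((x : ℝ) : Circle1) = x := by
  obtain ⟨k, hk⟩ := coe_eq_coe_iff.mp (coe_repb a ((x:ℝ) : Circle1))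
  have h1 := repb_mem a ((x:ℝ) : Circle1)
  have hk0 : k = 0 := by
    have h3 : (-1:ℝ) < k := by rw [← hk]; cases h1; cases hx; linarith
    have h4 : (k:ℝ) < 1 := by rw [← hk]; cases h1; cases hx; linarith
    have h3' : (-1:ℤ) < k := by exact_mod_cast h3
    have h4' : k < 1 := by exact_mod_cast h4
    omega
  rw [hk0] at hk
  push_cast at hk
  linarith

lemma coe_eq_coe_base {a x y : ℝ} (hx : x ∈ Ico a (a+1)) (hy : y ∈ Ico a (a+1)) :
    ((x:ℝ) : Circle1) = ((y:ℝ) : Circle1) ↔ x = y := by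
  constructor
  · intro h
    have := repb_coe hx
    rw [h, repb_coe hy] at this
    exact this.symm
  · rintro rfl; rfl

end Base

section Cells

variable {n : ℕ} (hn : 3 ≤ n)

noncomputable def gp (n i : ℕ) : ℝ := (i : ℝ) / n

lemma npos (hn : 3 ≤ n) : (0:ℝ) < n := by
  have : (3:ℝ) ≤ n := by exact_mod_cast hn
  linarith

lemma gp_lt_gp (hn : 3 ≤ n) {i j : ℕ} : gp n i < gp n j ↔ i < j := by
  unfold gp
  rw [div_lt_div_iff_of_pos_right (npos hn)]
  exact_mod_cast Nat.cast_lt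

lemma gp_le_gp (hn : 3 ≤ n) {i j : ℕ} : gp n i ≤ gp n j ↔ i ≤ j := by
  unfold gp
  rw [div_le_div_iff_of_pos_right (npos hn)]
  exact_mod_cast Nat.cast_le

lemma gp_zero : gp n 0 = 0 := by simp [gp]

lemma gp_n (hn : 3 ≤ n) : gp n n = 1 := by
  unfold gp; field_simp

lemma gp_nonneg {i : ℕ} : 0 ≤ gp n i := div_nonneg (Nat.cast_nonneg i) (Nat.cast_nonneg n)

lemma gp_le_one (hn : 3 ≤ n) {i : ℕ} (hi : i ≤ n) : gp n i ≤ 1 := by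
  rw [← gp_n hn]
  exact (gp_le_gp hn).mpr hi

lemma gp_succ_sub (hn : 3 ≤ n) (i : ℕ) : gp n (i+1) - gp n i = 1 / n := by
  unfold gp
  push_cast
  field_simp
  ring

/-- index of the cell containing a point of `[0,1)` -/
noncomputable def cidx (n : ℕ) (r : ℝ) : ℕ := ⌊(n:ℝ) * r⌋₊

lemma cidx_spec (hn : 3 ≤ n) {r : ℝ} (hr : r ∈ Ico (0:ℝ) 1) :
    cidx n r < n ∧ r ∈ Ico (gp n (cidx n r)) (gp n (cidx n r + 1)) := by
  have hnr : 0 ≤ (n:ℝ) * r := mul_nonneg (npos hn).le hr.1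
  have h1 : (cidx n r : ℝ) ≤ (n:ℝ) * r := Nat.floor_le hnr
  have h2 : (n:ℝ) * r < cidx n r + 1 := Nat.lt_floor_add_one _
  refine ⟨?_, ⟨?_, ?_⟩⟩
  · have : (n:ℝ) * r < n := by
      nlinarith [npos hn, hr.2]
    exact_mod_cast Nat.floor_lt hnr |>.mpr this
  · unfold gp
    rw [div_le_iff₀ (npos hn)]
    linarith
  · unfold gp
    rw [lt_div_iff₀ (npos hn)]
    push_cast
    linarith

/-- classification of circle points -/
lemma classify (hn : 3 ≤ n) (z : Circle1) :
    (∃ i, i < n ∧ z = ((gp n i : ℝ) : Circle1)) ∨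
    (∃ i, i < n ∧ repb 0 z ∈ Ioo (gp n i) (gp n (i+1))) := by
  have hr : repb 0 z ∈ Ico (0:ℝ) 1 := by simpa using repb_mem 0 z
  obtain ⟨hlt, hmem⟩ := cidx_spec hn hr
  rcases eq_or_lt_of_le hmem.1 with he | hl
  · left
    exact ⟨cidx n (repb 0 z), hlt, by rw [he, coe_repb]⟩
  · right
    exact ⟨cidx n (repb 0 z), hlt, hl, hmem.2⟩

lemma cell_sub_Ico (hn : 3 ≤ n) {i : ℕ} (hi : i < n) :
    Ioo (gp n i) (gp n (i+1)) ⊆ Ico (0:ℝ) 1 := by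
  intro x hx
  constructor
  · linarith [gp_nonneg (n := n) (i := i), hx.1]
  · have := gp_le_one hn (show i + 1 ≤ n from hi)
    linarith [hx.2]

lemma coe_inj_cells (hn : 3 ≤ n) {i j : ℕ} (hi : i < n) (hj : j < n) {x y : ℝ}
    (hx : x ∈ Ioo (gp n i) (gp n (i+1))) (hy : y ∈ Ioo (gp n j) (gp n (j+1)))
    (hxy : ((x:ℝ):Circle1) = ((y:ℝ):Circle1)) : i = j ∧ x = y := by
  have hx' := cell_sub_Ico hn hi hx
  have hy' := cell_sub_Ico hn hj hy
  have hxeq : x = y := by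
    have hx0 : x ∈ Ico (0:ℝ) (0+1) := by simpa using hx'
    have hy0 : y ∈ Ico (0:ℝ) (0+1) := by simpa using hy'
    exact (coe_eq_coe_base hx0 hy0).mp hxy
  subst hxeq
  constructor
  · have h1 : gp n j < gp n (i+1) := lt_of_lt_of_le hy.1 hx.2.le
    have h2 : gp n i < gp n (j+1) := lt_of_lt_of_le hx.1 hy.2.le
    have h1' : j < i + 1 := (gp_lt_gp hn).mp h1
    have h2' : i < j + 1 := (gp_lt_gp hn).mp h2
    omega
  · rfl

end Cells

section CellTop


variable {n : ℕ}

noncomputable def cellC (n i : ℕ) : Set Circle1 :=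
  (fun x : ℝ => ((x:ℝ):Circle1)) '' Ioo (gp n i) (gp n (i+1))

lemma coe_gp_n (hn : 3 ≤ n) : ((gp n n : ℝ):Circle1) = ((gp n 0 : ℝ) : Circle1) := by
  rw [gp_n hn, gp_zero]
  simpa using coe_add_one 0

lemma isOpenMap_coe_circle : IsOpenMap (fun x : ℝ => ((x:ℝ):Circle1)) :=
  QuotientAddGroup.isOpenMap_coe

lemma continuous_coe_circle : Continuous (fun x : ℝ => ((x:ℝ):Circle1)) :=
  continuous_quotient_mk'

lemma cellC_open (i : ℕ) : IsOpen (cellC n i) :=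
  isOpenMap_coe_circle _ isOpen_Ioo

lemma cellC_preconn (i : ℕ) : IsPreconnected (cellC n i) :=
  isPreconnected_Ioo.image _ continuous_coe_circle.continuousOn

lemma closure_cellC (hn : 3 ≤ n) {i : ℕ} (hi : i < n) :
    closure (cellC n i) ⊆ (fun x : ℝ => ((x:ℝ):Circle1)) '' Icc (gp n i) (gp n (i+1)) := by
  apply closure_minimal
  · exact image_mono Ioo_subset_Icc_self
  · exact (isCompact_Icc.image continuous_coe_circle).isClosed

lemma gp_mem_closure_cellC (hn : 3 ≤ n) (i : ℕ) {m : ℕ} (hm : m = i ∨ m = i + 1) :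
    ((gp n m : ℝ):Circle1) ∈ closure (cellC n i) := by
  have hne : gp n i ≠ gp n (i+1) := by
    have := (gp_lt_gp hn (i := i) (j := i+1)).mpr (Nat.lt_succ_self i)
    exact this.ne
  have h1 : gp n m ∈ closure (Ioo (gp n i) (gp n (i+1))) := by
    rw [closure_Ioo hne]
    rcases hm with rfl | rfl
    · exact ⟨le_refl _, ((gp_lt_gp hn).mpr (Nat.lt_succ_self m)).le⟩
    · exact ⟨((gp_lt_gp hn).mpr (Nat.lt_succ_self i)).le, le_refl _⟩
  have h2 := image_closure_subset_closure_image (s := Ioo (gp n i) (gp n (i+1)))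
    continuous_coe_circle
  exact h2 ⟨gp n m, h1, rfl⟩

lemma endpoint_case (hn : 3 ≤ n) {j m : ℕ} (hj : j < n) (hm : m ≤ n) {y : ℝ}
    (hy : y ∈ Icc (gp n j) (gp n (j+1))) (he : ((y:ℝ):Circle1) = ((gp n m : ℝ):Circle1)) :
    m = j ∨ m = j + 1 ∨ (m = 0 ∧ j + 1 = n) ∨ (m = n ∧ j = 0) := by
  obtain ⟨k, hk⟩ := coe_eq_coe_iff.mp he
  have hy0 : 0 ≤ y := le_trans gp_nonneg hy.1
  have hy1 : y ≤ 1 := le_trans hy.2 (gp_le_one hn (by omega))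
  have hm0 : 0 ≤ gp n m := gp_nonneg
  have hm1 : gp n m ≤ 1 := gp_le_one hn hm
  have hklo : (-1:ℤ) ≤ k := by
    have : (-1:ℝ) ≤ k := by rw [← hk]; linarith
    exact_mod_cast this
  have hkhi : k ≤ 1 := by
    have : (k:ℝ) ≤ 1 := by rw [← hk]; linarith
    exact_mod_cast this
  interval_cases k
  · -- y = gp m - 1
    push_cast at hk
    right; right; right
    have h1 : (1:ℝ) ≤ gp n m := by linarith
    have hmn : n ≤ m := by
      have := gp_n hn
      have : gp n n ≤ gp n m := by rw [gp_n hn]; exact h1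
      exact (gp_le_gp hn).mp this
    have hy0' : y = 0 := by
      have : gp n m ≤ 1 := hm1
      linarith
    constructor
    · omega
    · have : gp n j ≤ gp n 0 := by rw [gp_zero]; linarith [hy.1, hy0'.symm ▸ hy.1]
      have := (gp_le_gp hn).mp this
      omega
  · -- y = gp m
    push_cast at hk
    have hye : y = gp n m := by linarith
    rw [hye] at hy
    have h1 : j ≤ m := (gp_le_gp hn).mp hy.1
    have h2 : m ≤ j + 1 := (gp_le_gp hn).mp hy.2
    omega
  · -- y = gp m + 1
    push_cast at hk
    have h1 : gp n m ≤ 0 := by linarith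
    have hm0' : m = 0 := by
      have : gp n m ≤ gp n 0 := by rw [gp_zero]; exact h1
      have := (gp_le_gp hn).mp this
      omega
    have h2 : (1:ℝ) ≤ gp n (j+1) := by
      have : (1:ℝ) ≤ y := by rw [hm0', gp_zero] at hk; linarith
      linarith [hy.2]
    have h3 : n ≤ j + 1 := by
      have : gp n n ≤ gp n (j+1) := by rw [gp_n hn]; exact h2
      exact (gp_le_gp hn).mp this
    right; right; left
    exact ⟨hm0', by omega⟩

/-- a homeomorphism fixing all grid points maps each cell into itself -/
lemma cell_mapsTo (hn : 3 ≤ n) (f : Circle1 ≃ₜ Circle1)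
    (hfix : ∀ j, j ≤ n → f ((gp n j : ℝ):Circle1) = ((gp n j : ℝ):Circle1))
    {i : ℕ} (hi : i < n) : MapsTo (⇑f) (cellC n i) (cellC n i) := by
  set T : Set Circle1 := ⇑f '' cellC n i with hT
  have hTpre : IsPreconnected T := (cellC_preconn i).image _ f.continuous.continuousOn
  -- T avoids all grid points
  have hTgrid : ∀ m, m ≤ n → ((gp n m : ℝ):Circle1) ∉ T := by
    rintro m hm ⟨z, hz, hfz⟩
    obtain ⟨x, hx, rfl⟩ := hz
    have : ((x:ℝ):Circle1) = ((gp n m : ℝ):Circle1) := by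
      have := hfix m hm
      rw [← this] at hfz
      exact f.injective hfz
    -- but x is in an open cell, so not a grid point
    have hx01 : x ∈ Ico (0:ℝ) 1 := cell_sub_Ico hn hi hx
    rcases Nat.lt_or_ge m n with hmn | hmn
    · have hgp : gp n m ∈ Ico (0:ℝ) 1 := ⟨gp_nonneg, by
        have : gp n m < gp n n := (gp_lt_gp hn).mpr hmn
        rwa [gp_n hn] at this⟩
      have hxe : x = gp n m := by
        have hx0 : x ∈ Ico (0:ℝ) (0+1) := by simpa using hx01
        have hgp0 : gp n m ∈ Ico (0:ℝ) (0+1) := by simpa using hgp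
        exact (coe_eq_coe_base hx0 hgp0).mp this
      rw [hxe] at hx
      have h1 := (gp_lt_gp hn).mp hx.1
      have h2 := (gp_lt_gp hn).mp hx.2
      omega
    · have hmn' : m = n := by omega
      rw [hmn', coe_gp_n hn] at this
      have hgp : gp n 0 ∈ Ico (0:ℝ) 1 := ⟨gp_nonneg, by rw [gp_zero]; norm_num⟩
      have hxe : x = gp n 0 := by
        have hx0 : x ∈ Ico (0:ℝ) (0+1) := by simpa using hx01
        have hgp0 : gp n 0 ∈ Ico (0:ℝ) (0+1) := by simpa using hgp
        exact (coe_eq_coe_base hx0 hgp0).mp this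
      rw [hxe, gp_zero] at hx
      have := hx.1
      have := gp_nonneg (n := n) (i := i)
      linarith
  -- T is contained in the union of the open cells
  have hTsub : T ⊆ ⋃ j ∈ {j : ℕ | j < n}, cellC n j := by
    intro t ht
    rcases classify hn t with ⟨m, hmn, hme⟩ | ⟨m, hmn, hme⟩
    · exact absurd (hme ▸ ht) (hTgrid m hmn.le)
    · exact mem_biUnion hmn ⟨repb 0 t, hme, coe_repb 0 t⟩
  -- pick a point of T
  have hmid : (gp n i + gp n (i+1)) / 2 ∈ Ioo (gp n i) (gp n (i+1)) := by
    have : gp n i < gp n (i+1) := (gp_lt_gp hn).mpr (Nat.lt_succ_self i)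
    constructor <;> [linarith; linarith]
  set t₀ : Circle1 := f (((gp n i + gp n (i+1)) / 2 : ℝ) : Circle1) with ht₀
  have ht₀T : t₀ ∈ T := ⟨_, ⟨_, hmid, rfl⟩, rfl⟩
  obtain ⟨j₀, hj₀n, hj₀⟩ : ∃ j₀, j₀ < n ∧ t₀ ∈ cellC n j₀ := by
    have := hTsub ht₀T
    simp only [mem_iUnion, exists_prop] at this
    obtain ⟨j, hj, hjt⟩ := this
    exact ⟨j, hj, hjt⟩
  -- T lies inside the single cell j₀
  have hTj₀ : T ⊆ cellC n j₀ := by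
    set v : Set Circle1 := ⋃ j ∈ {j : ℕ | j < n ∧ j ≠ j₀}, cellC n j with hv
    have hdisj : Disjoint (cellC n j₀) v := by
      rw [Set.disjoint_left]
      rintro z ⟨x, hx, rfl⟩ hzv
      rw [hv] at hzv
      simp only [mem_iUnion, exists_prop] at hzv
      obtain ⟨j, ⟨hjn, hjne⟩, y, hy, hye⟩ := hzv
      have := coe_inj_cells hn hjn hj₀n hy hx hye
      exact hjne this.1
    have huv : T ⊆ cellC n j₀ ∪ v := by
      intro t ht
      have := hTsub ht
      simp only [mem_iUnion, exists_prop] at this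
      obtain ⟨j, hjn, hjt⟩ := this
      by_cases hje : j = j₀
      · exact Or.inl (hje ▸ hjt)
      · refine Or.inr ?_
        rw [hv]
        simp only [mem_iUnion, exists_prop]
        exact ⟨j, ⟨hjn, hje⟩, hjt⟩
    exact hTpre.subset_left_of_subset_union (cellC_open j₀)
      (isOpen_biUnion (fun j _ => cellC_open j)) hdisj huv ⟨t₀, ht₀T, hj₀⟩
  -- endpoints of cell i are in the closure of T
  have hend : ∀ m, (m = i ∨ m = i + 1) → ((gp n m : ℝ):Circle1) ∈ closure T := by
    intro m hm
    have h1 : ((gp n m : ℝ):Circle1) ∈ ⇑f '' closure (cellC n i) :=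
      ⟨_, gp_mem_closure_cellC hn i hm, hfix m (by rcases hm with rfl | rfl <;> omega)⟩
    exact (image_closure_subset_closure_image f.continuous) h1
  have hclos : closure T ⊆ (fun x : ℝ => ((x:ℝ):Circle1)) '' Icc (gp n j₀) (gp n (j₀+1)) :=
    le_trans (closure_mono hTj₀) (closure_cellC hn hj₀n)
  have hcase : ∀ m, m ≤ n → (m = i ∨ m = i + 1) →
      (m = j₀ ∨ m = j₀ + 1 ∨ (m = 0 ∧ j₀ + 1 = n) ∨ (m = n ∧ j₀ = 0)) := by
    intro m hm hmi
    obtain ⟨y, hy, hye⟩ := hclos (hend m hmi)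
    exact endpoint_case hn hj₀n hm hy hye
  have hc1 := hcase i (by omega) (Or.inl rfl)
  have hc2 := hcase (i+1) (by omega) (Or.inr rfl)
  have hij : i = j₀ := by omega
  rw [hT, ← hij] at hTj₀
  exact fun z hz => hTj₀ ⟨z, hz, rfl⟩

end CellTop

section FixLemmas


variable {n : ℕ}

noncomputable def betaPt (n i : ℕ) : ℝ := gp n (i+1) - 1 + 1/(2*(n:ℝ))

lemma dist_le_of_fix (hn : 3 ≤ n) (f : Circle1 ≃ₜ Circle1)
    (hfix : ∀ j, j ≤ n → f ((gp n j : ℝ):Circle1) = ((gp n j : ℝ):Circle1)) (z : Circle1) :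
    dist (f z) z ≤ 1 / n := by
  have hn' := npos hn
  rcases classify hn z with ⟨i, hi, he⟩ | ⟨i, hi, hmem⟩
  · rw [he, hfix i hi.le, dist_self]
    positivity
  · have hz : z = ((repb 0 z : ℝ):Circle1) := (coe_repb 0 z).symm
    have hfz : f z ∈ cellC n i := by
      rw [hz]
      exact cell_mapsTo hn f hfix hi ⟨repb 0 z, hmem, rfl⟩
    obtain ⟨y, hy, hye⟩ := hfz
    rw [← hye, hz]
    refine le_trans (dist_coe_le y (repb 0 z)) ?_
    rw [abs_le]
    have := gp_succ_sub hn i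
    constructor
    · cases hy; cases hmem; linarith
    · cases hy; cases hmem; linarith

/-- a homeomorphism fixing all grid points is orientation preserving -/
lemma op_of_fix (hn : 3 ≤ n) (f : Circle1 ≃ₜ Circle1)
    (hfix : ∀ j, j ≤ n → f ((gp n j : ℝ):Circle1) = ((gp n j : ℝ):Circle1)) :
    ∃ F : ℝ → ℝ, StrictMono F ∧ ∀ x : ℝ, f ((x:ℝ):Circle1) = ((F x : ℝ):Circle1) := by
  have hn' := npos hn
  have hn3 : (3:ℝ) ≤ n := by exact_mod_cast hn
  have hfrac1 : 1/(n:ℝ) ≤ 1/3 := by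
    rw [div_le_div_iff₀ (by linarith) (by norm_num)]
    linarith
  have hfrac2 : 1/(2*(n:ℝ)) ≤ 1/6 := by
    rw [div_le_div_iff₀ (by linarith) (by norm_num)]
    linarith
  set β : ℕ → ℝ := betaPt n with hβ
  have hβdef : ∀ i, β i = gp n (i+1) - 1 + 1/(2*(n:ℝ)) := fun i => rfl
  have hsub : ∀ i, gp n (i+1) - gp n i = 1 / n := gp_succ_sub hn
  have hβle : ∀ i, β i ≤ gp n i := by
    intro i
    have := hsub i
    rw [hβdef i]
    linarith
  have hβlt : ∀ i, gp n (i+1) < β i + 1 := by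
    intro i
    rw [hβdef i]
    have : 0 < 1/(2*(n:ℝ)) := by positivity
    linarith
  have hIccIco : ∀ i, Icc (gp n i) (gp n (i+1)) ⊆ Ico (β i) (β i + 1) := by
    intro i x hx
    exact ⟨le_trans (hβle i) hx.1, lt_of_le_of_lt hx.2 (hβlt i)⟩
  set α : ℕ → ℝ → ℝ := fun i x => repb (β i) (f ((x:ℝ):Circle1)) with hα
  have hmapsIcc : ∀ i, i < n → ∀ x ∈ Icc (gp n i) (gp n (i+1)),
      ∃ y ∈ Icc (gp n i) (gp n (i+1)), f ((x:ℝ):Circle1) = ((y:ℝ):Circle1) := by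
    intro i hi x hx
    rcases eq_or_lt_of_le hx.1 with he | hlt
    · exact ⟨gp n i, ⟨le_refl _, ((gp_lt_gp hn).mpr (Nat.lt_succ_self i)).le⟩,
        by rw [← he] at *; exact hfix i hi.le⟩
    rcases eq_or_lt_of_le hx.2 with he | hlt2
    · exact ⟨gp n (i+1), ⟨((gp_lt_gp hn).mpr (Nat.lt_succ_self i)).le, le_refl _⟩,
        by rw [he] at *; exact hfix (i+1) hi⟩
    · have : f ((x:ℝ):Circle1) ∈ cellC n i :=
        cell_mapsTo hn f hfix hi ⟨x, ⟨hlt, hlt2⟩, rfl⟩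
      obtain ⟨y, hy, hye⟩ := this
      exact ⟨y, Ioo_subset_Icc_self hy, hye.symm⟩
  have hαspec : ∀ i, i < n → ∀ x ∈ Icc (gp n i) (gp n (i+1)),
      α i x ∈ Icc (gp n i) (gp n (i+1)) ∧ ((α i x : ℝ):Circle1) = f ((x:ℝ):Circle1) := by
    intro i hi x hx
    obtain ⟨y, hy, hye⟩ := hmapsIcc i hi x hx
    have : α i x = y := by
      rw [hα]
      simp only
      rw [hye]
      exact repb_coe (hIccIco i hy)
    rw [this, hye]
    exact ⟨hy, rfl⟩
  have hαend : ∀ i, i < n → α i (gp n i) = gp n i ∧ α i (gp n (i+1)) = gp n (i+1) := by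
    intro i hi
    constructor
    · show repb (β i) _ = _
      rw [hfix i hi.le]
      exact repb_coe (hIccIco i ⟨le_refl _, ((gp_lt_gp hn).mpr (Nat.lt_succ_self i)).le⟩)
    · show repb (β i) _ = _
      rw [hfix (i+1) hi]
      exact repb_coe (hIccIco i ⟨((gp_lt_gp hn).mpr (Nat.lt_succ_self i)).le, le_refl _⟩)
  have hαmono : ∀ i, i < n → StrictMonoOn (α i) (Icc (gp n i) (gp n (i+1))) := by
    intro i hi
    have hle : gp n i ≤ gp n (i+1) := ((gp_lt_gp hn).mpr (Nat.lt_succ_self i)).le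
    apply ContinuousOn.strictMonoOn_of_injOn_Icc hle
    · rw [(hαend i hi).1, (hαend i hi).2]
      exact hle
    · -- continuity
      intro x hx
      apply ContinuousAt.continuousWithinAt
      have hne : f ((x:ℝ):Circle1) ≠ ((β i : ℝ):Circle1) := by
        obtain ⟨y, hy, hye⟩ := hmapsIcc i hi x hx
        rw [hye]
        intro he
        obtain ⟨k, hk⟩ := coe_eq_coe_iff.mp he
        have h1 : gp n i - β i ≤ y - β i := by cases hy; linarith
        have h2 : y - β i ≤ gp n (i+1) - β i := by cases hy; linarith
        have h3 : gp n i - β i = 1 - 1/(n:ℝ) - 1/(2*(n:ℝ)) := by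
          rw [hβdef i]; have := hsub i; linarith
        have h4 : gp n (i+1) - β i = 1 - 1/(2*(n:ℝ)) := by
          rw [hβdef i]; ring
        have h5 : (0:ℝ) < k := by
          rw [← hk]
          linarith
        have h6 : (k:ℝ) < 1 := by
          rw [← hk]
          have h7 : 0 < 1/(2*(n:ℝ)) := by positivity
          linarith [h2, h4]
        have h5' : 0 < k := by exact_mod_cast h5
        have h6' : k < 1 := by exact_mod_cast h6
        omega
      have h1 : ContinuousAt (fun x : ℝ => f ((x:ℝ):Circle1)) x :=
        (f.continuous.comp continuous_coe_circle).continuousAt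
      have h2 : ContinuousAt (⇑(AddCircle.equivIco 1 (β i))) (f ((x:ℝ):Circle1)) :=
        AddCircle.continuousAt_equivIco 1 (β i) hne
      have h3 : ContinuousAt ((fun z : Circle1 => ((AddCircle.equivIco 1 (β i) z : Ico (β i) (β i + 1)) : ℝ)) ∘
          (fun x : ℝ => f ((x:ℝ):Circle1))) x :=
        ContinuousAt.comp (continuous_subtype_val.continuousAt.comp h2) h1
      exact h3
    · -- injectivity
      intro x hx y hy he
      have h1 := (hαspec i hi x hx).2
      have h2 := (hαspec i hi y hy).2
      rw [he] at h1
      have : f ((x:ℝ):Circle1) = f ((y:ℝ):Circle1) := by rw [← h1, ← h2]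
      have hxy : ((x:ℝ):Circle1) = ((y:ℝ):Circle1) := f.injective this
      exact (coe_eq_coe_base (hIccIco i hx) (hIccIco i hy)).mp hxy
  -- global lift
  set L₀ : ℝ → ℝ := fun r => α (cidx n r) r with hL₀def
  have hL₀ : ∀ r, r ∈ Ico (0:ℝ) 1 →
      L₀ r ∈ Ico (gp n (cidx n r)) (gp n (cidx n r + 1)) ∧
      ((L₀ r : ℝ):Circle1) = f ((r:ℝ):Circle1) := by
    intro r hr
    obtain ⟨hi, hmem⟩ := cidx_spec hn hr
    have hIcc : r ∈ Icc (gp n (cidx n r)) (gp n (cidx n r + 1)) := Ico_subset_Icc_self hmem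
    obtain ⟨hrange, hcoe⟩ := hαspec _ hi r hIcc
    refine ⟨⟨hrange.1, ?_⟩, hcoe⟩
    have hend := (hαend _ hi).2
    calc L₀ r = α (cidx n r) r := rfl
      _ < α (cidx n r) (gp n (cidx n r + 1)) := by
          apply hαmono _ hi hIcc (right_mem_Icc.mpr ?_) hmem.2
          exact ((gp_lt_gp hn).mpr (Nat.lt_succ_self _)).le
      _ = gp n (cidx n r + 1) := hend
  set F : ℝ → ℝ := fun x => L₀ (Int.fract x) + ⌊x⌋ with hFdef
  have hfr : ∀ x : ℝ, Int.fract x ∈ Ico (0:ℝ) 1 :=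
    fun x => ⟨Int.fract_nonneg x, Int.fract_lt_one x⟩
  refine ⟨F, ?_, ?_⟩
  · intro x y hxy
    have hx := hL₀ _ (hfr x)
    have hy := hL₀ _ (hfr y)
    have hix : cidx n (Int.fract x) < n := (cidx_spec hn (hfr x)).1
    have hiy : cidx n (Int.fract y) < n := (cidx_spec hn (hfr y)).1
    have hFx : F x = L₀ (Int.fract x) + ⌊x⌋ := rfl
    have hFy : F y = L₀ (Int.fract y) + ⌊y⌋ := rfl
    rw [hFx, hFy]
    have hgpx1 : gp n (cidx n (Int.fract x) + 1) ≤ 1 := gp_le_one hn (by omega)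
    have hgpy0 : 0 ≤ gp n (cidx n (Int.fract y)) := gp_nonneg
    rcases lt_or_ge ⌊x⌋ ⌊y⌋ with h | h
    · have h2 : (⌊x⌋:ℝ) + 1 ≤ (⌊y⌋:ℝ) := by exact_mod_cast Int.add_one_le_iff.mpr h
      have := hx.1.2
      have := hy.1.1
      linarith
    · have hfe : ⌊x⌋ = ⌊y⌋ := le_antisymm (Int.floor_mono hxy.le) h
      have hfrlt : Int.fract x < Int.fract y := by
        simp only [Int.fract, hfe]; linarith
      have hidxle : cidx n (Int.fract x) ≤ cidx n (Int.fract y) := by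
        apply Nat.floor_mono
        exact mul_le_mul_of_nonneg_left hfrlt.le hn'.le
      rcases eq_or_lt_of_le hidxle with heq | hlt
      · -- same cell
        have hIccx : Int.fract x ∈ Icc (gp n (cidx n (Int.fract x)))
            (gp n (cidx n (Int.fract x) + 1)) :=
          Ico_subset_Icc_self (cidx_spec hn (hfr x)).2
        have hIccy : Int.fract y ∈ Icc (gp n (cidx n (Int.fract x)))
            (gp n (cidx n (Int.fract x) + 1)) := by
          rw [heq]
          exact Ico_subset_Icc_self (cidx_spec hn (hfr y)).2
        have := hαmono _ hix hIccx hIccy hfrlt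
        have hLx : L₀ (Int.fract x) = α (cidx n (Int.fract x)) (Int.fract x) := rfl
        have hLy : L₀ (Int.fract y) = α (cidx n (Int.fract y)) (Int.fract y) := rfl
        rw [hLx, hLy, ← heq] at *
        rw [hfe]
        linarith
      · -- different cells
        have h1 : gp n (cidx n (Int.fract x) + 1) ≤ gp n (cidx n (Int.fract y)) :=
          (gp_le_gp hn).mpr hlt
        have := hx.1.2
        have := hy.1.1
        rw [hfe]
        linarith
  · intro x
    have h1 : ((F x : ℝ):Circle1) = ((L₀ (Int.fract x) : ℝ):Circle1) := coe_add_int _ _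
    rw [h1, (hL₀ _ (hfr x)).2, coe_fract]

end FixLemmas

/-- Extension of a strictly monotone map on a finite subset of (0,1) to a periodic
strictly monotone homeomorphism lift fixing the integers. -/
lemma exists_extension (S : Finset ℝ) : ∀ φ : ℝ → ℝ, ↑S ⊆ Ioo (0:ℝ) 1 →
    StrictMonoOn φ ↑S → (∀ x ∈ S, φ x ∈ Ioo (0:ℝ) 1) →
    ∃ W : ℝ → ℝ, Continuous W ∧ StrictMono W ∧ (∀ x, W (x + 1) = W x + 1) ∧
      (∀ k : ℤ, W (k:ℝ) = k) ∧ (∀ x ∈ S, W x = φ x) := by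
  classical
  induction S using Finset.induction_on with
  | empty =>
      intro φ _ _ _
      exact ⟨id, continuous_id, strictMono_id, by simp, by simp, by simp⟩
  | @insert p S' hpS' ih =>
      intro φ hS hmono hrange
      have hsub : (S' : Set ℝ) ⊆ Set.Ioo (0:ℝ) 1 := fun x hx =>
        hS (by simp [Finset.mem_insert]; right; exact hx)
      obtain ⟨W', hW'c, hW'm, hW'per, hW'int, hW'val⟩ :=
        ih φ hsub (hmono.mono (by simp [Finset.coe_insert, Set.subset_insert]))
          (fun x hx => hrange x (Finset.mem_insert_of_mem hx))
      have hW'0 : W' 0 = 0 := by simpa using hW'int 0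
      have hW'1 : W' 1 = 1 := by simpa using hW'int 1
      have hpmem : p ∈ insert p S' := Finset.mem_insert_self p S'
      have hp01 : p ∈ Set.Ioo (0:ℝ) 1 := hS (by simpa using hpmem)
      have hφp01 : φ p ∈ Set.Ioo (0:ℝ) 1 := hrange p hpmem
      set A : Finset ℝ := insert (0:ℝ) ((S'.filter (fun x => x < p)).image φ) with hA
      set Bf : Finset ℝ := insert (1:ℝ) ((S'.filter (fun x => p < x)).image φ) with hB
      have hAne : A.Nonempty := ⟨0, Finset.mem_insert_self _ _⟩
      have hBne : Bf.Nonempty := ⟨1, Finset.mem_insert_self _ _⟩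
      set a := A.max' hAne with ha
      set b := Bf.min' hBne with hb
      have hmemA : ∀ y ∈ A, y = 0 ∨ ∃ x ∈ S', x < p ∧ φ x = y := by
        intro y hy
        rcases Finset.mem_insert.mp hy with h | h
        · exact Or.inl h
        · obtain ⟨x, hx, hxy⟩ := Finset.mem_image.mp h
          obtain ⟨hx1, hx2⟩ := Finset.mem_filter.mp hx
          exact Or.inr ⟨x, hx1, hx2, hxy⟩
      have hmemB : ∀ y ∈ Bf, y = 1 ∨ ∃ x ∈ S', p < x ∧ φ x = y := by
        intro y hy
        rcases Finset.mem_insert.mp hy with h | h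
        · exact Or.inl h
        · obtain ⟨x, hx, hxy⟩ := Finset.mem_image.mp h
          obtain ⟨hx1, hx2⟩ := Finset.mem_filter.mp hx
          exact Or.inr ⟨x, hx1, hx2, hxy⟩
      have hmemcoe : ∀ x ∈ S', (x : ℝ) ∈ (↑(insert p S') : Set ℝ) := by
        intro x hx
        simp [Finset.mem_insert]
        right; exact hx
      have hpcoe : (p : ℝ) ∈ (↑(insert p S') : Set ℝ) := by simpa using hpmem
      have h0a : 0 ≤ a := Finset.le_max' A 0 (Finset.mem_insert_self _ _)
      have hb1 : b ≤ 1 := Finset.min'_le Bf 1 (Finset.mem_insert_self _ _)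
      have haφ : a < φ p := by
        rw [ha, Finset.max'_lt_iff]
        intro y hy
        rcases hmemA y hy with rfl | ⟨x, hx, hxp, rfl⟩
        · exact hφp01.1
        · exact hmono (hmemcoe x hx) hpcoe hxp
      have haw : a < W' p := by
        rw [ha, Finset.max'_lt_iff]
        intro y hy
        rcases hmemA y hy with rfl | ⟨x, hx, hxp, rfl⟩
        · rw [← hW'0]; exact hW'm hp01.1
        · rw [← hW'val x hx]; exact hW'm hxp
      have hφb : φ p < b := by
        rw [hb, Finset.lt_min'_iff]
        intro y hy
        rcases hmemB y hy with rfl | ⟨x, hx, hxp, rfl⟩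
        · exact hφp01.2
        · exact hmono hpcoe (hmemcoe x hx) hxp
      have hwb : W' p < b := by
        rw [hb, Finset.lt_min'_iff]
        intro y hy
        rcases hmemB y hy with rfl | ⟨x, hx, hxp, rfl⟩
        · rw [← hW'1]; exact hW'm hp01.2
        · rw [← hW'val x hx]; exact hW'm hxp
      obtain ⟨L, hLc, hLm, hLper, hLp, hLoff, hLint⟩ :=
        exists_periodic_gadget h0a haw hwb hb1 haφ hφb
      refine ⟨L ∘ W', hLc.comp hW'c, hLm.comp hW'm, ?_, ?_, ?_⟩
      · intro x
        simp only [comp_apply, hW'per, hLper]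
      · intro k
        simp only [comp_apply, hW'int, hLint]
      · intro x hx
        rcases Finset.mem_insert.mp hx with rfl | hx'
        · simpa using hLp
        · have hval : W' x = φ x := hW'val x hx'
          have hφx : φ x ∈ Set.Ioo (0:ℝ) 1 := hrange x (Finset.mem_insert_of_mem hx')
          have hoff : φ x ∉ Set.Ioo a b := by
            rcases lt_trichotomy x p with hlt | heq | hgt
            · have : φ x ≤ a := Finset.le_max' A (φ x)
                (Finset.mem_insert_of_mem (Finset.mem_image.mpr
                  ⟨x, Finset.mem_filter.mpr ⟨hx', hlt⟩, rfl⟩))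
              exact fun hc => absurd hc.1 (not_lt.mpr this)
            · exact absurd (heq ▸ hx') hpS'
            · have : b ≤ φ x := Finset.min'_le Bf (φ x)
                (Finset.mem_insert_of_mem (Finset.mem_image.mpr
                  ⟨x, Finset.mem_filter.mpr ⟨hx', hgt⟩, rfl⟩))
              exact fun hc => absurd hc.2 (not_lt.mpr this)
          simp only [comp_apply, hval]
          exact hLoff (φ x) hφx.1.le hφx.2.le hoff

lemma exists_homeo_of_lift {W : ℝ → ℝ} (hc : Continuous W) (hm : StrictMono W)
    (hper : ∀ x, W (x + 1) = W x + 1) :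
    ∃ (v : Circle1 ≃ₜ Circle1) (V : ℝ → ℝ), StrictMono V ∧
      (∀ x : ℝ, v ((x:ℝ):Circle1) = ((W x : ℝ):Circle1)) ∧
      (∀ y : ℝ, v.symm ((y:ℝ):Circle1) = ((V y : ℝ):Circle1)) := by
  -- surjectivity of W
  have hsurj : Function.Surjective W := by
    intro y
    set k : ℕ := ⌈|y - W 0|⌉₊ with hk
    have hky : |y - W 0| ≤ k := Nat.le_ceil _
    have h1 : W (-(k:ℝ)) ≤ y := by
      have h2 := per_add_int hper 0 (-(k:ℤ))
      push_cast at h2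
      rw [zero_add] at h2
      rw [h2]
      cases abs_le.mp hky with
      | intro h _ => linarith
    have h2 : y ≤ W (k:ℝ) := by
      have h2' := per_add_int hper 0 (k:ℤ)
      push_cast at h2'
      rw [zero_add] at h2'
      rw [h2']
      cases abs_le.mp hky with
      | intro _ h => linarith
    have hle : -(k:ℝ) ≤ (k:ℝ) := by
      have : (0:ℝ) ≤ k := Nat.cast_nonneg k
      linarith
    obtain ⟨x, _, hx⟩ := intermediate_value_Icc hle hc.continuousOn ⟨h1, h2⟩
    exact ⟨x, hx⟩
  set oi := StrictMono.orderIsoOfSurjective W hm hsurj with hoi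
  have hoiapp : ∀ x, oi x = W x := fun x => rfl
  set V : ℝ → ℝ := fun y => oi.symm y with hV
  have hWV : ∀ y, W (V y) = y := by
    intro y
    have := oi.apply_symm_apply y
    rw [← hoiapp]
    exact this
  have hVW : ∀ x, V (W x) = x := by
    intro x
    have := oi.symm_apply_apply x
    rw [hoiapp] at this
    exact this
  have hVm : StrictMono V := fun x y hxy => oi.symm.strictMono hxy
  have hVc : Continuous V := by
    have := OrderIso.continuous oi.symm
    exact this
  have hVper : ∀ y, V (y + 1) = V y + 1 := by
    intro y
    apply hm.injective
    rw [hWV, hper, hWV]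
  -- circle maps
  have hfcont : Continuous (fun x : ℝ => ((W x : ℝ) : Circle1)) :=
    continuous_quotient_mk'.comp hc
  have hgcont : Continuous (fun y : ℝ => ((V y : ℝ) : Circle1)) :=
    continuous_quotient_mk'.comp hVc
  have hfper : (fun x : ℝ => ((W x : ℝ) : Circle1)) 0
      = (fun x : ℝ => ((W x : ℝ) : Circle1)) (0 + 1) := by
    simp only [zero_add]
    rw [show W 1 = W 0 + 1 by simpa using hper 0, coe_add_one]
  have hgper : (fun y : ℝ => ((V y : ℝ) : Circle1)) 0
      = (fun y : ℝ => ((V y : ℝ) : Circle1)) (0 + 1) := by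
    simp only [zero_add]
    rw [show V 1 = V 0 + 1 by simpa using hVper 0, coe_add_one]
  set toF : Circle1 → Circle1 := AddCircle.liftIco 1 0 (fun x => ((W x : ℝ) : Circle1))
  set toG : Circle1 → Circle1 := AddCircle.liftIco 1 0 (fun y => ((V y : ℝ) : Circle1))
  have hF : ∀ x : ℝ, toF ((x:ℝ):Circle1) = ((W x : ℝ):Circle1) := by
    intro x
    rw [← coe_fract x]
    have h1 : Int.fract x ∈ Ico (0:ℝ) (0 + 1) := by
      simp [Int.fract_nonneg, Int.fract_lt_one]
    rw [show toF ((Int.fract x : ℝ):Circle1) = ((W (Int.fract x) : ℝ):Circle1) from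
      AddCircle.liftIco_coe_apply h1]
    rw [per_fract hper x, coe_add_int]
  have hG : ∀ y : ℝ, toG ((y:ℝ):Circle1) = ((V y : ℝ):Circle1) := by
    intro y
    rw [← coe_fract y]
    have h1 : Int.fract y ∈ Ico (0:ℝ) (0 + 1) := by
      simp [Int.fract_nonneg, Int.fract_lt_one]
    rw [show toG ((Int.fract y : ℝ):Circle1) = ((V (Int.fract y) : ℝ):Circle1) from
      AddCircle.liftIco_coe_apply h1]
    rw [per_fract hVper y, coe_add_int]
  have hFc : Continuous toF := AddCircle.liftIco_continuous hfper hfcont.continuousOn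
  have hGc : Continuous toG := AddCircle.liftIco_continuous hgper hgcont.continuousOn
  have hleft : ∀ z, toG (toF z) = z := by
    intro z
    rw [← coe_repb 0 z, hF, hG, hVW]
  have hright : ∀ z, toF (toG z) = z := by
    intro z
    rw [← coe_repb 0 z, hG, hF, hWV]
  refine ⟨⟨⟨toF, toG, hleft, hright⟩, hFc, hGc⟩, V, hVm, hF, hG⟩


section Pattern

variable {n : ℕ}

/-- the preimage data of a homeomorphism -/
noncomputable def tp (n : ℕ) (f : Circle1 ≃ₜ Circle1) (j : ℕ) : ℝ :=
  repb 0 (f.symm ((gp n j : ℝ):Circle1))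

/-- the combinatorial pattern of a homeomorphism at scale `n` -/
noncomputable def pat (n : ℕ) (f : Circle1 ≃ₜ Circle1) :
    (Fin n → Fin n → Ordering) × (Fin n → Fin n → Ordering) :=
  (fun j k => compare (tp n f j) (tp n f k), fun j k => compare (tp n f j) (gp n k))

/-- representative of a pattern -/
noncomputable def rp (n : ℕ) (σ : (Fin n → Fin n → Ordering) × (Fin n → Fin n → Ordering)) :
    Circle1 ≃ₜ Circle1 :=
  if hσ : ∃ g, OrientationPreserving g ∧ pat n g = σ then hσ.choose else 1

noncomputable def phi (n : ℕ) (h g : Circle1 ≃ₜ Circle1) : ℝ → ℝ :=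
  fun x => if hx : ∃ j, j < n ∧ tp n h j = x then tp n g hx.choose else x

lemma tp_coe (f : Circle1 ≃ₜ Circle1) (j : ℕ) :
    ((tp n f j : ℝ):Circle1) = f.symm ((gp n j : ℝ):Circle1) := coe_repb 0 _

lemma tp_mem (n : ℕ) (f : Circle1 ≃ₜ Circle1) (j : ℕ) : tp n f j ∈ Ico (0:ℝ) 1 := by
  simpa [tp] using repb_mem 0 (f.symm ((gp n j : ℝ):Circle1))

lemma gp_mem_Ico (hn : 3 ≤ n) {j : ℕ} (hj : j < n) : gp n j ∈ Ico (0:ℝ) 1 :=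
  ⟨gp_nonneg, by rw [← gp_n hn]; exact (gp_lt_gp hn).mpr hj⟩

lemma Ico01 {x : ℝ} (hx : x ∈ Ico (0:ℝ) 1) : x ∈ Ico (0:ℝ) (0+1) := by simpa using hx

lemma gp_inj (hn : 3 ≤ n) {j k : ℕ} (hj : j < n) (hk : k < n) (he : gp n j = gp n k) :
    j = k := by
  have h1 : j ≤ k := (gp_le_gp hn).mp he.le
  have h2 : k ≤ j := (gp_le_gp hn).mp he.ge
  omega

lemma tp_inj (hn : 3 ≤ n) (f : Circle1 ≃ₜ Circle1) {j k : ℕ} (hj : j < n) (hk : k < n)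
    (he : tp n f j = tp n f k) : j = k := by
  have h1 : ((tp n f j : ℝ):Circle1) = ((tp n f k : ℝ):Circle1) := by rw [he]
  rw [tp_coe, tp_coe] at h1
  have h2 := f.symm.injective h1
  exact gp_inj hn hj hk ((coe_eq_coe_base (Ico01 (gp_mem_Ico hn hj))
    (Ico01 (gp_mem_Ico hn hk))).mp h2)

lemma rp_op (n : ℕ) (σ : (Fin n → Fin n → Ordering) × (Fin n → Fin n → Ordering)) :
    OrientationPreserving (rp n σ) := by
  unfold rp
  by_cases hσ : ∃ g, OrientationPreserving g ∧ pat n g = σ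
  · rw [dif_pos hσ]; exact hσ.choose_spec.1
  · rw [dif_neg hσ]
    exact ⟨id, strictMono_id, fun x => rfl⟩

lemma rp_spec (n : ℕ) (h : Circle1 ≃ₜ Circle1) (hOP : OrientationPreserving h) :
    pat n (rp n (pat n h)) = pat n h := by
  have hex : ∃ g, OrientationPreserving g ∧ pat n g = pat n h := ⟨h, hOP, rfl⟩
  unfold rp
  rw [dif_pos hex]
  exact hex.choose_spec.2

section Transfer

variable {h g : Circle1 ≃ₜ Circle1} (hpat : pat n g = pat n h)

lemma pat_tt (hpat : pat n g = pat n h) {j k : ℕ} (hj : j < n) (hk : k < n) :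
    compare (tp n g j) (tp n g k) = compare (tp n h j) (tp n h k) := by
  have := congrFun (congrFun (congrArg Prod.fst hpat) ⟨j, hj⟩) ⟨k, hk⟩
  simpa [pat] using this

lemma pat_tg (hpat : pat n g = pat n h) {j k : ℕ} (hj : j < n) (hk : k < n) :
    compare (tp n g j) (gp n k) = compare (tp n h j) (gp n k) := by
  have := congrFun (congrFun (congrArg Prod.snd hpat) ⟨j, hj⟩) ⟨k, hk⟩
  simpa [pat] using this

lemma pat_lt_iff (hpat : pat n g = pat n h) {j k : ℕ} (hj : j < n) (hk : k < n) :
    (tp n g j < tp n g k ↔ tp n h j < tp n h k) := by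
  rw [← compare_lt_iff_lt, ← compare_lt_iff_lt, pat_tt hpat hj hk]

lemma pat_ltg_iff (hpat : pat n g = pat n h) {j k : ℕ} (hj : j < n) (hk : k < n) :
    (tp n g j < gp n k ↔ tp n h j < gp n k) := by
  rw [← compare_lt_iff_lt, ← compare_lt_iff_lt, pat_tg hpat hj hk]

lemma pat_eqg_iff (hpat : pat n g = pat n h) {j k : ℕ} (hj : j < n) (hk : k < n) :
    (tp n g j = gp n k ↔ tp n h j = gp n k) := by
  constructor
  · intro hcase
    have c1 : compare (tp n h j) (gp n k) = Ordering.eq := by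
      rw [← pat_tg hpat hj hk]; exact compare_eq_iff_eq.mpr hcase
    exact compare_eq_iff_eq.mp c1
  · intro hcase
    have c1 : compare (tp n g j) (gp n k) = Ordering.eq := by
      rw [pat_tg hpat hj hk]; exact compare_eq_iff_eq.mpr hcase
    exact compare_eq_iff_eq.mp c1

end Transfer

lemma phi_tp (hn : 3 ≤ n) (h g : Circle1 ≃ₜ Circle1) {j : ℕ} (hj : j < n) :
    phi n h g (tp n h j) = tp n g j := by
  unfold phi
  have hx : ∃ j', j' < n ∧ tp n h j' = tp n h j := ⟨j, hj, rfl⟩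
  rw [dif_pos hx]
  obtain ⟨h1, h2⟩ := hx.choose_spec
  rw [tp_inj hn h h1 hj h2]

lemma phi_gp (hn : 3 ≤ n) {h g : Circle1 ≃ₜ Circle1} (hpat : pat n g = pat n h)
    {i : ℕ} (hi : i < n) : phi n h g (gp n i) = gp n i := by
  unfold phi
  by_cases hx : ∃ j, j < n ∧ tp n h j = gp n i
  · rw [dif_pos hx]
    obtain ⟨h1, h2⟩ := hx.choose_spec
    exact (pat_eqg_iff hpat h1 hi).mpr h2
  · rw [dif_neg hx]

end Pattern

section MoreHelpers

variable {n : ℕ}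

lemma fix_extend (hn : 3 ≤ n) (f : Circle1 ≃ₜ Circle1)
    (hfix : ∀ j, j < n → f ((gp n j : ℝ):Circle1) = ((gp n j : ℝ):Circle1)) :
    ∀ j, j ≤ n → f ((gp n j : ℝ):Circle1) = ((gp n j : ℝ):Circle1) := by
  intro j hj
  rcases Nat.lt_or_ge j n with hlt | hge
  · exact hfix j hlt
  · have : j = n := by omega
    subst this
    rw [coe_gp_n hn]
    exact hfix 0 (by omega)

lemma symm_fix {f : Circle1 ≃ₜ Circle1} {z : Circle1} (hz : f z = z) : f.symm z = z := by
  conv_lhs => rw [← hz]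
  exact f.symm_apply_apply z

lemma mul_apply' (a b : Circle1 ≃ₜ Circle1) (z : Circle1) : (a * b) z = a (b z) := rfl

lemma inv_apply' (a : Circle1 ≃ₜ Circle1) (z : Circle1) : (a⁻¹) z = a.symm z := rfl

end MoreHelpers

lemma nhds_basis_homeo (U : Set (Circle1 ≃ₜ Circle1)) (hU : U ∈ nhds 1) :
    ∃ ε > 0, ∀ f : Circle1 ≃ₜ Circle1,
      (∀ z, dist (f z) z < ε) → (∀ z, dist (f.symm z) z < ε) → f ∈ U := by
  set m : (Circle1 ≃ₜ Circle1) → C(Circle1, Circle1) × C(Circle1, Circle1) :=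
    fun f => ((⟨f, f.continuous_toFun⟩ : C(Circle1, Circle1)),
      (⟨f.symm, f.symm.continuous_toFun⟩ : C(Circle1, Circle1))) with hm
  have heq : nhds (1 : Circle1 ≃ₜ Circle1) = Filter.comap m (nhds (m 1)) :=
    nhds_induced m 1
  rw [heq, Filter.mem_comap] at hU
  obtain ⟨t, ht, hsub⟩ := hU
  have hm1 : m 1 = (ContinuousMap.id Circle1, ContinuousMap.id Circle1) := by
    rw [hm]
    constructor
  rw [hm1] at ht
  rw [mem_nhds_prod_iff] at ht
  obtain ⟨V₁, hV₁, V₂, hV₂, hVsub⟩ := ht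
  obtain ⟨ε₁, hε₁, hball₁⟩ := Metric.mem_nhds_iff.mp hV₁
  obtain ⟨ε₂, hε₂, hball₂⟩ := Metric.mem_nhds_iff.mp hV₂
  refine ⟨min ε₁ ε₂, lt_min hε₁ hε₂, ?_⟩
  intro f hf hfs
  apply hsub
  show m f ∈ t
  apply hVsub
  constructor
  · apply hball₁
    rw [Metric.mem_ball]
    rw [ContinuousMap.dist_lt_iff hε₁]
    intro x
    exact lt_of_lt_of_le (hf x) (min_le_left _ _)
  · apply hball₂
    rw [Metric.mem_ball]
    rw [ContinuousMap.dist_lt_iff hε₂]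
    intro x
    exact lt_of_lt_of_le (hfs x) (min_le_right _ _)

end
end RoelckeAux

open RoelckeAux

/-- `Homeo₊(S¹)`, with the subspace topology inherited from the uniform convergence
topology on `Homeo(S¹)`, is Roelcke precompact: for every neighbourhood `U` of the
identity there are finitely many `g₁, …, g_k` in it with
`Homeo₊(S¹) = ⋃ (U ∩ Homeo₊) gⱼ (U ∩ Homeo₊)`. -/
theorem homeoPlus_circle_roelckePrecompact :
    ∀ U ∈ nhds (1 : Circle1 ≃ₜ Circle1), ∃ F : Finset (Circle1 ≃ₜ Circle1),
      (↑F : Set (Circle1 ≃ₜ Circle1)) ⊆ {f | OrientationPreserving f} ∧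
      ∀ h, OrientationPreserving h → ∃ f ∈ F,
        h ∈ (U ∩ {f | OrientationPreserving f}) * ({f} : Set (Circle1 ≃ₜ Circle1)) *
          (U ∩ {f | OrientationPreserving f}) := by
  intro U hU
  classical
  obtain ⟨ε, hε, hball⟩ := nhds_basis_homeo U hU
  obtain ⟨n, hn3, hnε⟩ : ∃ n : ℕ, 3 ≤ n ∧ 1/(n:ℝ) < ε := by
    obtain ⟨n, hn⟩ := exists_nat_gt (max 3 (1/ε))
    have h3 : (3:ℝ) < n := lt_of_le_of_lt (le_max_left _ _) hn
    have h1 : 1/ε < n := lt_of_le_of_lt (le_max_right _ _) hn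
    have hnpos : (0:ℝ) < n := by linarith
    refine ⟨n, ?_, ?_⟩
    · exact_mod_cast h3.le
    · rw [div_lt_iff₀ hnpos]
      have := (div_lt_iff₀ hε).mp h1
      linarith
  refine ⟨Finset.image (rp n) Finset.univ, ?_, ?_⟩
  · intro g hg
    simp only [Finset.coe_image, Set.mem_image] at hg
    obtain ⟨σ, _, rfl⟩ := hg
    exact rp_op n σ
  · intro h hOP
    set g : Circle1 ≃ₜ Circle1 := rp n (pat n h) with hgdef
    have hgOP : OrientationPreserving g := rp_op n (pat n h)
    have hgpat : pat n g = pat n h := rp_spec n h hOP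
    refine ⟨g, Finset.mem_image_of_mem (rp n) (Finset.mem_univ (pat n h)), ?_⟩
    set S : Finset ℝ :=
      ((Finset.range n).image (gp n) ∪ (Finset.range n).image (tp n h)) \ {(0:ℝ)} with hSdef
    have hSmem : ∀ x : ℝ, x ∈ S ↔
        ((∃ i, i < n ∧ gp n i = x) ∨ (∃ j, j < n ∧ tp n h j = x)) ∧ ¬ (x = 0) := by
      intro x
      rw [hSdef]
      simp only [Finset.mem_sdiff, Finset.mem_union, Finset.mem_image, Finset.mem_range,
        Finset.mem_singleton]
    have hS_sub : (↑S : Set ℝ) ⊆ Set.Ioo (0:ℝ) 1 := by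
      intro x hx
      obtain ⟨hform, hne⟩ := (hSmem x).mp (Finset.mem_coe.mp hx)
      rcases hform with ⟨i, hi, rfl⟩ | ⟨j, hj, rfl⟩
      · have hm := gp_mem_Ico hn3 hi
        exact ⟨lt_of_le_of_ne hm.1 (Ne.symm hne), hm.2⟩
      · have hm := tp_mem n h j
        exact ⟨lt_of_le_of_ne hm.1 (Ne.symm hne), hm.2⟩
    have hmonoφ : StrictMonoOn (phi n h g) ↑S := by
      intro x hx y hy hxy
      obtain ⟨hformx, hnex⟩ := (hSmem x).mp (Finset.mem_coe.mp hx)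
      obtain ⟨hformy, hney⟩ := (hSmem y).mp (Finset.mem_coe.mp hy)
      by_cases hxT : ∃ j, j < n ∧ tp n h j = x
      · obtain ⟨j, hj, hjx⟩ := hxT
        rw [← hjx, phi_tp hn3 h g hj]
        by_cases hyT : ∃ k, k < n ∧ tp n h k = y
        · obtain ⟨k, hk, hky⟩ := hyT
          rw [← hky, phi_tp hn3 h g hk]
          exact (pat_lt_iff hgpat hj hk).mpr (by rw [hjx, hky]; exact hxy)
        · have hform' : ∃ i, i < n ∧ gp n i = y := by
            rcases hformy with hy1 | hy2
            · exact hy1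
            · exact absurd hy2 hyT
          obtain ⟨i, hi, hiy⟩ := hform'
          have hphiy : phi n h g y = y := by
            unfold phi; rw [dif_neg hyT]
          rw [hphiy, ← hiy]
          exact (pat_ltg_iff hgpat hj hi).mpr (by rw [hjx, hiy]; exact hxy)
      · obtain ⟨i, hi, hix⟩ : ∃ i, i < n ∧ gp n i = x := by
          rcases hformx with hx1 | hx2
          · exact hx1
          · exact absurd hx2 hxT
        have hφx : phi n h g x = x := by unfold phi; rw [dif_neg hxT]
        rw [hφx]
        by_cases hyT : ∃ k, k < n ∧ tp n h k = y
        · obtain ⟨k, hk, hky⟩ := hyT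
          rw [← hky, phi_tp hn3 h g hk]
          have h1 : ¬ (tp n h k < gp n i) := by rw [hix, hky]; exact not_lt.mpr hxy.le
          have h2 : ¬ (tp n h k = gp n i) := by
            rw [hix, hky]; exact fun he => absurd he.symm (ne_of_lt hxy)
          have h3 : ¬ (tp n g k < gp n i) := fun hc => h1 ((pat_ltg_iff hgpat hk hi).mp hc)
          have h4 : ¬ (tp n g k = gp n i) := fun hc => h2 ((pat_eqg_iff hgpat hk hi).mp hc)
          rw [← hix]
          rcases lt_trichotomy (tp n g k) (gp n i) with hc | hc | hc
          · exact absurd hc h3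
          · exact absurd hc h4
          · exact hc
        · have hφy : phi n h g y = y := by unfold phi; rw [dif_neg hyT]
          rw [hφy]; exact hxy
    have hrangeφ : ∀ x ∈ S, phi n h g x ∈ Set.Ioo (0:ℝ) 1 := by
      intro x hxS
      obtain ⟨hform, hne⟩ := (hSmem x).mp hxS
      by_cases hxT : ∃ j, j < n ∧ tp n h j = x
      · obtain ⟨j, hj, hjx⟩ := hxT
        rw [← hjx, phi_tp hn3 h g hj]
        have hmem := tp_mem n g j
        refine ⟨lt_of_le_of_ne hmem.1 ?_, hmem.2⟩
        intro he0
        have he1 : tp n g j = gp n 0 := by rw [gp_zero]; exact he0.symm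
        have he2 := (pat_eqg_iff hgpat hj (by omega)).mp he1
        rw [gp_zero] at he2
        exact hne (by rw [← hjx, he2])
      · have hφx : phi n h g x = x := by unfold phi; rw [dif_neg hxT]
        rw [hφx]
        exact hS_sub (Finset.mem_coe.mpr hxS)
    obtain ⟨W, hWc, hWm, hWper, hWint, hWval⟩ :=
      exists_extension S (phi n h g) hS_sub hmonoφ hrangeφ
    have hW0 : W 0 = 0 := by simpa using hWint 0
    have hW_tp : ∀ j, j < n → W (tp n h j) = tp n g j := by
      intro j hj
      by_cases h0 : tp n h j = 0
      · rw [h0, hW0]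
        have h1 : tp n h j = gp n 0 := by rw [gp_zero]; exact h0
        have h2 := (pat_eqg_iff hgpat hj (by omega)).mpr h1
        rw [gp_zero] at h2
        exact h2.symm
      · have hmem : tp n h j ∈ S := (hSmem _).mpr ⟨Or.inr ⟨j, hj, rfl⟩, h0⟩
        rw [hWval _ hmem, phi_tp hn3 h g hj]
    have hW_gp : ∀ i, i < n → W (gp n i) = gp n i := by
      intro i hi
      rcases Nat.eq_zero_or_pos i with rfl | hi0
      · rw [gp_zero, hW0]
      · have hne : gp n i ≠ 0 := by
          have h1 : gp n 0 < gp n i := (gp_lt_gp hn3).mpr hi0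
          rw [gp_zero] at h1
          exact ne_of_gt h1
        have hmem : gp n i ∈ S := (hSmem _).mpr ⟨Or.inl ⟨i, hi, rfl⟩, hne⟩
        rw [hWval _ hmem, phi_gp hn3 hgpat hi]
    obtain ⟨v, V, hVm, hvapp, hvsymm⟩ := exists_homeo_of_lift hWc hWm hWper
    have hv_gp : ∀ j, j < n → v ((gp n j : ℝ):Circle1) = ((gp n j : ℝ):Circle1) := by
      intro j hj
      rw [hvapp, hW_gp j hj]
    have hv_gp' := fix_extend hn3 v hv_gp
    have hvsymm_gp' : ∀ j, j ≤ n → v.symm ((gp n j:ℝ):Circle1) = ((gp n j:ℝ):Circle1) :=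
      fun j hj => symm_fix (hv_gp' j hj)
    set A : Circle1 ≃ₜ Circle1 := h * (g * v)⁻¹ with hAdef
    have hgv_t : ∀ j, j < n → (g * v) ((tp n h j : ℝ):Circle1) = ((gp n j : ℝ):Circle1) := by
      intro j hj
      rw [mul_apply', hvapp, hW_tp j hj]
      rw [show ((tp n g j : ℝ):Circle1) = g.symm ((gp n j : ℝ):Circle1) from tp_coe g j]
      exact g.apply_symm_apply _
    have hA_fix : ∀ j, j < n → A ((gp n j : ℝ):Circle1) = ((gp n j : ℝ):Circle1) := by
      intro j hj
      rw [hAdef, mul_apply', inv_apply']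
      have h1 : (g * v).symm ((gp n j : ℝ):Circle1) = ((tp n h j : ℝ):Circle1) := by
        rw [← hgv_t j hj]
        exact (g * v).symm_apply_apply _
      rw [h1, show ((tp n h j : ℝ):Circle1) = h.symm ((gp n j : ℝ):Circle1) from tp_coe h j]
      exact h.apply_symm_apply _
    have hA_fix' := fix_extend hn3 A hA_fix
    have hAsymm_fix' : ∀ j, j ≤ n → A.symm ((gp n j:ℝ):Circle1) = ((gp n j:ℝ):Circle1) :=
      fun j hj => symm_fix (hA_fix' j hj)
    have hvU : v ∈ U := by
      apply hball v
      · intro z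
        exact lt_of_le_of_lt (dist_le_of_fix hn3 v hv_gp' z) hnε
      · intro z
        exact lt_of_le_of_lt (dist_le_of_fix hn3 v.symm hvsymm_gp' z) hnε
    have hvOP : OrientationPreserving v := ⟨W, hWm, hvapp⟩
    have hAU : A ∈ U := by
      apply hball A
      · intro z
        exact lt_of_le_of_lt (dist_le_of_fix hn3 A hA_fix' z) hnε
      · intro z
        exact lt_of_le_of_lt (dist_le_of_fix hn3 A.symm hAsymm_fix' z) hnε
    have hAOP : OrientationPreserving A := op_of_fix hn3 A hA_fix'
    have hfac : (A * g) * v = h := by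
      rw [hAdef, mul_assoc]
      exact inv_mul_cancel_right h (g * v)
    rw [← hfac]
    exact Set.mul_mem_mul (Set.mul_mem_mul ⟨hAU, hAOP⟩ rfl) ⟨hvU, hvOP⟩
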